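/- Let E and F be Banach spaces, r > 0, and let A : B_r(0) ⊂ E → F be a C¹ mapping such that A'(0) : E → F is surjective. Set ξ₀ = A(0). Then there exist ε > 0, a mapping W : B_ε(ξ₀) ⊂ F → E, and a constant K > 0 such that for all z ∈ B_ε(ξ₀): W(z) ∈ B_r(0), A(W(z)) = z, and ‖W(z)‖_E ≤ K‖z − ξ₀‖_F. -/

import Mathlib

open Metric

/-- Liusternik's theorem (local right inverse theorem). -/
theorem liusternik
    {E F : Type*} [NormedAddCommGroup E] [NormedSpace ℝ E] [CompleteSpace E]
    [NormedAddCommGroup F] [NormedSpace ℝ F] [CompleteSpace F]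
    (r : ℝ) (hr : 0 < r) (A : E → F) (A' : E →L[ℝ] F)
    (hC1 : ContDiffOn ℝ 1 A (ball (0 : E) r))
    (hderiv : HasFDerivAt A A' 0)
    (hsurj : Function.Surjective A') :
    ∃ ε > 0, ∃ W : F → E, ∃ K > 0,
      ∀ z ∈ ball (A 0) ε,
        W z ∈ ball (0 : E) r ∧ A (W z) = z ∧ ‖W z‖ ≤ K * ‖z - A 0‖ := by
  -- strict derivative at 0
  have h0 : (0 : E) ∈ ball (0 : E) r := by simp [hr]
  have hCA : ContDiffAt ℝ 1 A 0 :=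
    hC1.contDiffAt (isOpen_ball.mem_nhds h0)
  have hstrict' : HasStrictFDerivAt A (fderiv ℝ A 0) 0 :=
    hCA.hasStrictFDerivAt one_ne_zero
  have hfd : fderiv ℝ A 0 = A' := hderiv.fderiv
  rw [hfd] at hstrict'
  -- nonlinear right inverse
  set f'symm := A'.nonlinearRightInverseOfSurjective (LinearMap.range_eq_top.2 hsurj) with hf'
  have Npos : (0 : ℝ) < f'symm.nnnorm :=
    A'.nonlinearRightInverseOfSurjective_nnnorm_pos (LinearMap.range_eq_top.2 hsurj)
  set N : ℝ := (f'symm.nnnorm : ℝ) with hN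
  set c : NNReal := f'symm.nnnorm⁻¹ / 2 with hc
  have hcpos : 0 < c := by
    have hnz : f'symm.nnnorm ≠ 0 := by
      intro h; rw [hN, h] at Npos; simp at Npos
    rw [hc]
    exact div_pos (inv_pos.2 (pos_iff_ne_zero.2 hnz)) two_pos
  obtain ⟨s, hs, happrox⟩ := hstrict'.approximates_deriv_on_nhds (Or.inr hcpos)
  obtain ⟨δ, hδpos, hδs⟩ := Metric.mem_nhds_iff.1 hs
  -- choose radius
  set ρ : ℝ := min (δ / 2) (r / 2) with hρ
  have hρpos : 0 < ρ := lt_min (by linarith) (by linarith)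
  have hρδ : closedBall (0 : E) ρ ⊆ s := fun x hx => hδs <| by
    rw [mem_closedBall, dist_zero_right] at hx
    rw [mem_ball, dist_zero_right]
    calc ‖x‖ ≤ ρ := hx
    _ ≤ δ / 2 := min_le_left _ _
    _ < δ := by linarith
  have happrox' : ApproximatesLinearOn A A' (closedBall (0 : E) ρ) c :=
    happrox.mono_set hρδ
  -- key constants
  have hNc : (0 : ℝ) < N⁻¹ - c := by
    have : (c : ℝ) = N⁻¹ / 2 := by
      rw [hc, hN]
      push_cast [NNReal.coe_div, NNReal.coe_inv]
      norm_num
    rw [this]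
    have : 0 < N⁻¹ := by positivity
    linarith
  set ε : ℝ := (N⁻¹ - c) * ρ with hε
  have hεpos : 0 < ε := mul_pos hNc hρpos
  set K : ℝ := (N⁻¹ - (c : ℝ))⁻¹ with hK
  have hKpos : 0 < K := by positivity
  -- existence of preimages
  have main : ∀ z : F, ∃ x : E, z ∈ ball (A 0) ε →
      x ∈ ball (0 : E) r ∧ A x = z ∧ ‖x‖ ≤ K * ‖z - A 0‖ := by
    intro z
    by_cases hz : z ∈ ball (A 0) ε
    · set t : ℝ := K * ‖z - A 0‖ with ht
      have htnn : 0 ≤ t := by positivity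
      have htρ : t ≤ ρ := by
        have hzd : ‖z - A 0‖ < ε := by
          rw [mem_ball, dist_eq_norm] at hz; exact hz
        have : t < K * ε := by
          rcases eq_or_lt_of_le (norm_nonneg (z - A 0)) with h | h
          · rw [ht, ← h]; simp; positivity
          · exact (mul_lt_mul_iff_right₀ hKpos).2 hzd
        have : t < ρ := by
          rw [hε, hK] at this
          rwa [inv_mul_cancel_left₀ (ne_of_gt hNc)] at this
        linarith
      have hsub : closedBall (0 : E) t ⊆ closedBall (0 : E) ρ :=
        closedBall_subset_closedBall htρ
      have happt : ApproximatesLinearOn A A' (closedBall (0 : E) t) c :=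
        happrox'.mono_set hsub
      have hzmem : z ∈ closedBall (A 0) ((N⁻¹ - c) * t) := by
        rw [mem_closedBall, dist_eq_norm]
        rw [ht, hK, ← mul_assoc, mul_inv_cancel₀ (ne_of_gt hNc), one_mul]
      obtain ⟨x, hx, hAx⟩ :=
        happt.surjOn_closedBall_of_nonlinearRightInverse f'symm htnn
          subset_rfl hzmem
      refine ⟨x, fun _ => ⟨?_, hAx, ?_⟩⟩
      · rw [mem_closedBall, dist_zero_right] at hx
        rw [mem_ball, dist_zero_right]
        calc ‖x‖ ≤ t := hx
        _ ≤ ρ := htρ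
        _ ≤ r / 2 := min_le_right _ _
        _ < r := by linarith
      · rw [mem_closedBall, dist_zero_right] at hx
        exact hx
    · exact ⟨0, fun h => absurd h hz⟩
  choose W hW using main
  exact ⟨ε, hεpos, W, K, hKpos, fun z hz => hW z hz⟩
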